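/- Let γ be the Coxeter element on weakly increasing k-tuples with entries in {0,...,n−1} as above, of order k+1. For each 1 ≤ i ≤ k, the coordinate function g_i(x) = x_i has orbit-average i(n−1)/(k+1) on every γ-orbit: for every x ∈ X, (1/(k+1)) Σ_{j=0}^{k} g_i(γ^j x) = i(n−1)/(k+1). -/

import Mathlib

/-- The reflection `ρ_i` acting on extended tuples `(x₀, x₁, ..., x_k, x_{k+1})`. -/
def rho (k : ℕ) (i : Fin k) (x : Fin (k + 2) → ℝ) : Fin (k + 2) → ℝ :=
  fun j =>
    if j.val = i.val + 1 then
      x ⟨i.val, by omega⟩ + x ⟨i.val + 2, by omega⟩ - x ⟨i.val + 1, by omega⟩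
    else x j

/-- `gammaAux k m = ρ_m ∘ ⋯ ∘ ρ_2 ∘ ρ_1` (1-based numbering; `ρ_1` acts first). -/
def gammaAux (k : ℕ) : ℕ → (Fin (k + 2) → ℝ) → Fin (k + 2) → ℝ
  | 0 => id
  | m + 1 => if h : m < k then rho k ⟨m, h⟩ ∘ gammaAux k m else gammaAux k m

/-- The Coxeter element `γ = ρ_k ∘ ⋯ ∘ ρ_1`. -/
def gammaMap (k : ℕ) : (Fin (k + 2) → ℝ) → Fin (k + 2) → ℝ := gammaAux k k

/-- Membership in `X`: weakly increasing tuples with `x₀ = 0`, `x_{k+1} = n - 1`. -/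
def inX (n k : ℕ) (x : Fin (k + 2) → ℝ) : Prop :=
  Monotone x ∧ x 0 = 0 ∧ x (Fin.last (k + 1)) = (n : ℝ) - 1

/-!
Write `dₗ = y_{l+1} - y_l` (`0 ≤ l ≤ k`) for the gaps of an extended tuple `y`. By the closed
form `γ(y)_j = y₀ + y_{j+1} - y₁` (`1 ≤ j ≤ k`), `γ` fixes `y₀` and rotates the gap vector
cyclically, `d(γ y)_l = d(y)_{l+1 mod k+1}`. Hence `γʲ(y)_{a+1} = y₀ + ∑_{l ≤ a} d(y)_{l+j}`, and
summing over a full period `j = 0, …, k` every term runs through all gaps, whose total is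
`y_{k+1} - y₀`: the orbit sum of the coordinate `a + 1` is `(k+1) y₀ + (a+1) (y_{k+1} - y₀)`.
-/

open Fin.NatCast

lemma Fin.mk_add_one {n a : ℕ} (h : a + 1 < n + 1) :
    (⟨a, by omega⟩ + 1 : Fin (n + 1)) = ⟨a + 1, h⟩ :=
  Fin.ext (Fin.val_add_one_of_lt (Fin.lt_def.2 (Nat.lt_of_succ_lt_succ h)))

lemma gammaAux_apply {k m : ℕ} (hm : m ≤ k) (y : Fin (k + 2) → ℝ) (j : Fin (k + 2)) :
    gammaAux k m y j = if j.val = 0 ∨ m < j.val then y j else y 0 + y (j + 1) - y 1 := by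
  induction m generalizing j with
  | zero => simp [gammaAux]
  | succ m ih =>
    have hmk : m < k := by omega
    simp only [gammaAux, dif_pos hmk, Function.comp_apply, rho]
    by_cases hj : j.val = m + 1
    · obtain ⟨j, _⟩ := j
      subst hj
      simp only [ih hmk.le, lt_irrefl, or_false, show m < m + 1 by omega,
        show m < m + 2 by omega, or_true, if_true, Nat.add_one_ne_zero,
        if_false, Fin.mk_add_one (show m + 1 < k + 2 by omega),
        Fin.mk_add_one (show m + 2 < k + 2 by omega)]
      split_ifs with hm0
      · subst hm0; rfl
      · ring
    · have hcond : (j.val = 0 ∨ m < j.val) ↔ (j.val = 0 ∨ m + 1 < j.val) := by omega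
      simp only [if_neg hj, ih hmk.le, hcond]

lemma gammaMap_apply (k : ℕ) (y : Fin (k + 2) → ℝ) (j : Fin (k + 2)) :
    gammaMap k y j = if j.val = 0 ∨ k < j.val then y j else y 0 + y (j + 1) - y 1 :=
  gammaAux_apply le_rfl y j

lemma iterate_gammaMap_apply_zero (k j : ℕ) (y : Fin (k + 2) → ℝ) :
    (gammaMap k)^[j] y 0 = y 0 := by
  induction j with
  | zero => rfl
  | succ j ih => simp [Function.iterate_succ_apply', gammaMap_apply, ih]

def gaps {M : Type*} [Sub M] {n : ℕ} (y : Fin (n + 1) → M) (l : Fin n) : M :=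
  y l.succ - y l.castSucc

section gaps

variable {M : Type*} [AddCommGroup M] {k : ℕ}

lemma apply_succ_eq_add_sum_gaps (y : Fin (k + 2) → M) (a : Fin (k + 1)) :
    y a.succ = y 0 + ∑ l ∈ Finset.Iic a, gaps y l := by
  simp only [gaps, Fin.sum_Iic_sub, add_sub_cancel]

lemma sum_gaps (y : Fin (k + 2) → M) : ∑ l, gaps y l = y (Fin.last (k + 1)) - y 0 := by
  rw [← Finset.Iic_top, Fin.top_eq_last, eq_sub_iff_add_eq', ← Fin.succ_last,
    ← apply_succ_eq_add_sum_gaps]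

lemma sum_range_gaps_add (y : Fin (k + 2) → M) (l : Fin (k + 1)) :
    ∑ j ∈ Finset.range (k + 1), gaps y (l + (j : Fin (k + 1))) = y (Fin.last (k + 1)) - y 0 := by
  rw [← Fin.sum_univ_eq_sum_range (fun j => gaps y (l + (j : Fin (k + 1))))]
  simp only [Fin.cast_val_eq_self]
  exact (Equiv.sum_comp (Equiv.addLeft l) (gaps y)).trans (sum_gaps y)

end gaps

lemma gaps_gammaMap (k : ℕ) (y : Fin (k + 2) → ℝ) (l : Fin (k + 1)) :
    gaps (gammaMap k y) l = gaps y (l + 1) := by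
  induction l using Fin.lastCases with
  | last =>
    simp only [gaps, gammaMap_apply, Fin.val_castSucc, Fin.val_last,
      Fin.coeSucc_eq_succ, Fin.last_add_one, Fin.succ_zero_eq_one, Fin.castSucc_zero,
      Nat.lt_add_one, or_true, if_true, lt_irrefl, or_false, Fin.succ_last]
    split_ifs with hk
    · subst hk; rfl
    · ring
  | cast c =>
    have hc := c.isLt
    simp only [gaps, gammaMap_apply, Fin.val_succ, Fin.val_castSucc, Fin.succ_castSucc,
      Fin.coeSucc_eq_succ, Nat.add_eq_zero_iff, one_ne_zero, and_false,
      show ¬ k < c.val + 1 by omega, show ¬ k < c.val by omega, or_false, if_false]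
    split_ifs with hc0
    · have h0 : c.castSucc.castSucc = 0 := Fin.ext hc0
      have h1 : c.succ.castSucc = 1 := Fin.ext (by simp [hc0])
      rw [h0, h1]; ring
    · ring

lemma gaps_iterate_gammaMap (k j : ℕ) (y : Fin (k + 2) → ℝ) (l : Fin (k + 1)) :
    gaps ((gammaMap k)^[j] y) l = gaps y (l + (j : Fin (k + 1))) := by
  induction j generalizing y with
  | zero => simp
  | succ j ih => rw [Function.iterate_succ_apply, ih, gaps_gammaMap, Nat.cast_succ, add_assoc]

theorem sum_range_iterate_gammaMap (k : ℕ) (y : Fin (k + 2) → ℝ) (a : Fin (k + 1)) :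
    ∑ j ∈ Finset.range (k + 1), (gammaMap k)^[j] y a.succ =
      (k + 1 : ℝ) * y 0 + ((a : ℕ) + 1) * (y (Fin.last (k + 1)) - y 0) := by
  calc ∑ j ∈ Finset.range (k + 1), (gammaMap k)^[j] y a.succ
      = ∑ j ∈ Finset.range (k + 1),
          (y 0 + ∑ l ∈ Finset.Iic a, gaps y (l + (j : Fin (k + 1)))) := by
        simp only [apply_succ_eq_add_sum_gaps ((gammaMap k)^[_] y), iterate_gammaMap_apply_zero,
          gaps_iterate_gammaMap]
    _ = (k + 1) * y 0 +
          ∑ l ∈ Finset.Iic a, ∑ j ∈ Finset.range (k + 1), gaps y (l + (j : Fin (k + 1))) := by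
        rw [Finset.sum_add_distrib, Finset.sum_const, Finset.card_range, Finset.sum_comm,
          nsmul_eq_mul]
        push_cast
        ring
    _ = (k + 1) * y 0 + ((a : ℕ) + 1) * (y (Fin.last (k + 1)) - y 0) := by
        simp only [sum_range_gaps_add, Finset.sum_const, Fin.card_Iic, nsmul_eq_mul]
        push_cast
        ring

theorem stmt_11 (n k : ℕ)
    (x : Fin (k + 2) → ℝ) (hx : inX n k x) (i : Fin k) :
    (1 / ((k : ℝ) + 1)) *
        ∑ j ∈ Finset.range (k + 1), (gammaMap k)^[j] x ⟨i.val + 1, by omega⟩ =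
      ((i.val : ℝ) + 1) * ((n : ℝ) - 1) / ((k : ℝ) + 1) := by
  rw [show (⟨i.val + 1, _⟩ : Fin (k + 2)) = i.castSucc.succ from rfl,
    sum_range_iterate_gammaMap, hx.2.1, hx.2.2]
  field_simp
  rw [Fin.val_castSucc]
  ring
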